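/- arXiv:2309.13250 — 6 statements merged into one kernel-verified Lean document; each statement's English description precedes it below -/
import Mathlib

section
/- Let μ be a finite nonnegative measure on a partially ordered measurable space T (with {(x,y) : x ≤ y} measurable), and define the non-strict run coefficients L̄ₙ = μⁿ({a₁ ≤ ... ≤ aₙ}) for n ≥ 2, L̄₁ = μ(T), L̄₀ = 1. Then for all n ≥ 2, L̄ₙ ≤ L̄₂ · L̄ₙ₋₂. -/
/-!
Splitting the coordinates `Fin (2 + m) = Fin 2 ⊕ Fin m` identifies `μ^(2+m)` with `μ² ⊗ μ^m`.
A monotone tuple restricts to monotone tuples on both blocks, so the set of monotone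
`(2+m)`-tuples lies in the product of the two sets of monotone tuples, whose measure is `L̄₂ · L̄ₘ`.
-/

open MeasureTheory

section FinAppend

variable {T : Type*} [MeasurableSpace T] (μ : Measure T) [SigmaFinite μ]

theorem measure_pi_fin_add_eq_mul (m k : ℕ) (s : Set (Fin m → T)) (t : Set (Fin k → T)) :
    Measure.pi (fun _ : Fin (m + k) => μ)
        {f | (fun i => f (Fin.castAdd k i)) ∈ s ∧ (fun i => f (Fin.natAdd m i)) ∈ t} =
      Measure.pi (fun _ : Fin m => μ) s * Measure.pi (fun _ : Fin k => μ) t := by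
  let split := (MeasurableEquiv.piCongrLeft (fun _ => T) finSumFinEquiv).symm.trans
    (MeasurableEquiv.sumPiEquivProdPi fun _ : Fin m ⊕ Fin k => T)
  have hsplit : MeasurePreserving split (Measure.pi fun _ : Fin (m + k) => μ)
      ((Measure.pi fun _ : Fin m => μ).prod (Measure.pi fun _ : Fin k => μ)) :=
    (measurePreserving_sumPiEquivProdPi fun _ => μ).comp
      ((measurePreserving_piCongrLeft (fun _ => μ) finSumFinEquiv).symm _)
  have hpre : {f : Fin (m + k) → T |
      (fun i => f (Fin.castAdd k i)) ∈ s ∧ (fun i => f (Fin.natAdd m i)) ∈ t} =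
        split ⁻¹' s ×ˢ t := by
    ext f
    simp [split, MeasurableEquiv.sumPiEquivProdPi, Equiv.sumPiEquivProdPi,
      MeasurableEquiv.piCongrLeft, Equiv.piCongrLeft, Equiv.piCongrLeft']
  rw [hpre, hsplit.measure_preimage_equiv, Measure.prod_prod]

theorem measure_pi_setOf_monotone_add_le [Preorder T] (m k : ℕ) :
    Measure.pi (fun _ : Fin (m + k) => μ) {f | Monotone f} ≤
      Measure.pi (fun _ : Fin m => μ) {f | Monotone f} *
        Measure.pi (fun _ : Fin k => μ) {f | Monotone f} := by
  rw [← measure_pi_fin_add_eq_mul]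
  exact measure_mono fun f hf =>
    ⟨hf.comp (Fin.strictMono_castAdd k).monotone, hf.comp (Fin.strictMono_natAdd m).monotone⟩

end FinAppend

theorem stmt3_general {T : Type*} [MeasurableSpace T] [PartialOrder T]
    (μ : Measure T) [IsFiniteMeasure μ]
    (L : ℕ → ENNReal)
    (hL : ∀ n, L n = (Measure.pi fun _ : Fin n => μ) {f : Fin n → T | Monotone f})
    (n : ℕ) (hn : 2 ≤ n) :
    L n ≤ L 2 * L (n - 2) := by
  obtain ⟨m, rfl⟩ := Nat.exists_eq_add_of_le hn
  rw [hL, hL, hL, Nat.add_sub_cancel_left]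
  exact measure_pi_setOf_monotone_add_le μ 2 m

/-- non-strict run coefficients L̄ₙ = μⁿ({a₁ ≤ ... ≤ aₙ}) (which gives L̄₀ = 1 and
L̄₁ = μ(T)) satisfy L̄ₙ ≤ L̄₂ · L̄ₙ₋₂ for n ≥ 2. -/
theorem stmt3 {T : Type*} [MeasurableSpace T] [PartialOrder T]
    (hord : MeasurableSet {p : T × T | p.1 ≤ p.2})
    (μ : Measure T) [IsFiniteMeasure μ]
    (L : ℕ → ENNReal)
    (hL : ∀ n, L n = (Measure.pi fun _ : Fin n => μ) {f : Fin n → T | Monotone f})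
    (n : ℕ) (hn : 2 ≤ n) :
    L n ≤ L 2 * L (n - 2) :=
  stmt3_general μ L hL n hn
end

section
/- Let μ be a finite measure on a partial order T, let C = sup over atoms α of μ({α}) (C = 0 if no atoms). Then 2·μ²({(a,b) : a ≤ b}) ≤ ‖μ‖² + C·‖μ‖. -/
/-! Reflecting `{a ≤ b}` in the diagonal gives `{a ≥ b}`, a set of the same `μ ⊗ μ`-measure;
by antisymmetry the two sets meet only on the diagonal. Inclusion–exclusion therefore bounds
`2 μ²{a ≤ b}` by `‖μ‖²` plus the mass of the diagonal, which is `∫ μ{x} dμ(x) ≤ C ‖μ‖`. -/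

open MeasureTheory Measure Set

section ProdSelf

variable {α : Type*} [MeasurableSpace α] {μ : Measure α}

lemma prod_self_preimage_swap [SFinite μ] (s : Set (α × α)) :
    μ.prod μ (Prod.swap ⁻¹' s) = μ.prod μ s :=
  MeasurePreserving.measure_preimage_equiv (f := MeasurableEquiv.prodComm)
    (measurePreserving_swap (μ := μ) (ν := μ)) s

lemma prod_self_le_measure_univ_sq (s : Set (α × α)) : μ.prod μ s ≤ μ univ ^ 2 := by
  calc μ.prod μ s ≤ μ.prod μ (univ ×ˢ univ) := measure_mono (univ_prod_univ ▸ subset_univ s)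
    _ ≤ μ univ ^ 2 := (prod_prod_le _ _).trans_eq (sq _).symm

lemma two_mul_prod_self_le [SFinite μ] {s : Set (α × α)} (hs : MeasurableSet s) :
    2 * μ.prod μ s ≤ μ univ ^ 2 + μ.prod μ (s ∩ Prod.swap ⁻¹' s) := by
  calc 2 * μ.prod μ s = μ.prod μ s + μ.prod μ (Prod.swap ⁻¹' s) := by
        rw [prod_self_preimage_swap, two_mul]
    _ = μ.prod μ (s ∪ Prod.swap ⁻¹' s) + μ.prod μ (s ∩ Prod.swap ⁻¹' s) :=
        (measure_union_add_inter s (hs.preimage measurable_swap)).symm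
    _ ≤ μ univ ^ 2 + μ.prod μ (s ∩ Prod.swap ⁻¹' s) :=
        add_le_add_left (prod_self_le_measure_univ_sq _) _

lemma prod_le_mul_measure_univ_of_slice_le {β : Type*} [MeasurableSpace β] {ν : Measure β}
    [SFinite ν] {s : Set (α × β)} (hs : MeasurableSet s) {c : ENNReal}
    (hc : ∀ x, ν (Prod.mk x ⁻¹' s) ≤ c) : μ.prod ν s ≤ c * μ univ := by
  calc μ.prod ν s = ∫⁻ x, ν (Prod.mk x ⁻¹' s) ∂μ := prod_apply hs
    _ ≤ ∫⁻ _, c ∂μ := lintegral_mono hc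
    _ = c * μ univ := lintegral_const c

lemma prod_self_le_iSup_atom_mul_of_subset_diagonal [SFinite μ] {s : Set (α × α)}
    (hs : MeasurableSet s) (hdiag : s ⊆ {p | p.1 = p.2}) :
    μ.prod μ s ≤ (⨆ x, μ {x}) * μ univ := by
  refine prod_le_mul_measure_univ_of_slice_le hs fun x => ?_
  have hslice : Prod.mk x ⁻¹' s ⊆ {x} := fun y hy => (hdiag hy).symm
  exact (measure_mono hslice).trans (le_iSup (fun x => μ {x}) x)

end ProdSelf

/-- with C the supremum of the masses of atoms of μ,
2·μ²({(a,b) : a ≤ b}) ≤ ‖μ‖² + C·‖μ‖. -/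
theorem stmt4 {T : Type*} [MeasurableSpace T] [PartialOrder T]
    (hord : MeasurableSet {p : T × T | p.1 ≤ p.2})
    (μ : Measure T) [IsFiniteMeasure μ] :
    2 * (μ.prod μ) {p : T × T | p.1 ≤ p.2}
      ≤ μ Set.univ ^ 2 + (⨆ x : T, μ {x}) * μ Set.univ := by
  have hdiag : {p : T × T | p.1 ≤ p.2} ∩ Prod.swap ⁻¹' {p | p.1 ≤ p.2} ⊆ {p | p.1 = p.2} :=
    fun _ ⟨hle, hge⟩ => le_antisymm hle hge
  calc 2 * μ.prod μ {p : T × T | p.1 ≤ p.2}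
      ≤ μ univ ^ 2 + μ.prod μ ({p : T × T | p.1 ≤ p.2} ∩ Prod.swap ⁻¹' {p | p.1 ≤ p.2}) :=
        two_mul_prod_self_le hord
    _ ≤ μ univ ^ 2 + (⨆ x : T, μ {x}) * μ univ :=
        add_le_add_right (prod_self_le_iSup_atom_mul_of_subset_diagonal
          (hord.inter (hord.preimage measurable_swap)) hdiag) _
end

section
/- Let {Xᵢ} be i.i.d. with law μ on a partial order, let L°ₙ = P(X₁ < ... < Xₙ), and fix i ≥ 1, n ≥ 1. Then P(X_{i−1} ≮ Xᵢ < X_{i+1} < ... < X_{i+n−1} ≮ X_{i+n}) = L°ₙ − 2L°ₙ₊₁ + L°ₙ₊₂. -/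
/-!
Write `R` for the run `X i < ⋯ < X (i+n-1)`, `a` for the ascent `X (i-1) < X i` and `b` for
`X (i+n-1) < X (i+n)`. Inclusion–exclusion gives
`P (aᶜ ∩ R ∩ bᶜ) + P (a ∩ R) + P (R ∩ b) = P R + P (a ∩ R ∩ b)`, and `R`, `a ∩ R`, `R ∩ b`,
`a ∩ R ∩ b` are runs of consecutive ascents among `n`, `n+1`, `n+1`, `n+2` variables. Since the law
of a shifted i.i.d. sequence is again the infinite product of `μ`, such a run has probability
`L°` of its number of variables wherever it starts; by transitivity, such a run is the same as a
chain.
-/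

open MeasureTheory ProbabilityTheory

theorem strictMonoOn_Icc_add_iff {α : Type*} [Preorder α] {f : ℕ → α} {s k : ℕ} :
    StrictMonoOn f (Set.Icc s (s + k)) ↔ ∀ t < k, f (s + t) < f (s + t + 1) := by
  refine ⟨fun h t ht => h ⟨by omega, by omega⟩ ⟨by omega, by omega⟩ (by omega), fun h => ?_⟩
  refine strictMonoOn_of_lt_succ Set.ordConnected_Icc fun a _ ha hsa => ?_
  obtain ⟨t, rfl⟩ : ∃ t, a = s + t := ⟨a - s, by grind⟩
  rw [Order.succ_eq_add_one] at hsa ⊢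
  exact h t (by grind)

theorem measure_compl_inter_inter_compl_add {Ω : Type*} [MeasurableSpace Ω] (P : Measure Ω)
    (R : Set Ω) {a b : Set Ω} (ha : MeasurableSet a) (hb : MeasurableSet b) :
    P (aᶜ ∩ R ∩ bᶜ) + (P (a ∩ R) + P (R ∩ b)) = P R + P (a ∩ R ∩ b) := by
  have e1 : aᶜ ∩ R ∩ bᶜ = (R \ a) \ b := by ext; simp; tauto
  have e2 : a ∩ R ∩ b = R ∩ b ∩ a := by ext; simp; tauto
  have e3 : (R ∩ b) \ a = (R \ a) ∩ b := by ext; simp; tauto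
  rw [e1, e2, Set.inter_comm a R, ← measure_inter_add_sdiff R ha,
    ← measure_inter_add_sdiff (R ∩ b) ha, ← measure_inter_add_sdiff (R \ a) hb, e3]
  ring

theorem measurableSet_setOf_lt {α T : Type*} [MeasurableSpace α] [MeasurableSpace T] [LT T]
    (hord : MeasurableSet {p : T × T | p.1 < p.2}) {f g : α → T} (hf : Measurable f)
    (hg : Measurable g) : MeasurableSet {x | f x < g x} :=
  hf.prodMk hg hord

section IncreasingRun

variable {Ω T : Type*} {X : ℕ → Ω → T}

def increasingRun [LT T] (X : ℕ → Ω → T) (s k : ℕ) : Set Ω :=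
  {ω | ∀ t < k, X (s + t) ω < X (s + t + 1) ω}

theorem mem_increasingRun_iff_forall_lt [Preorder T] {s k : ℕ} {ω : Ω} :
    ω ∈ increasingRun X s k ↔ ∀ j l, s ≤ j → j < l → l < s + k + 1 → X j ω < X l ω := by
  rw [increasingRun, Set.mem_ofPred_eq, ← strictMonoOn_Icc_add_iff (f := (X · ω))]
  exact ⟨fun h j l hj hjl hl => h ⟨hj, by omega⟩ ⟨by omega, by omega⟩ hjl,
    fun h j hj l hl hjl => h j l hj.1 hjl (by grind)⟩

theorem increasingRun_succ [LT T] (s k : ℕ) :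
    increasingRun X s (k + 1) = increasingRun X s k ∩ {ω | X (s + k) ω < X (s + k + 1) ω} := by
  ext ω
  exact Nat.forall_lt_succ_right

theorem increasingRun_succ' [LT T] (s k : ℕ) :
    increasingRun X s (k + 1) = {ω | X s ω < X (s + 1) ω} ∩ increasingRun X (s + 1) k := by
  ext ω
  simp only [increasingRun, Set.mem_ofPred_eq, Set.mem_inter_iff, Nat.forall_lt_succ_left',
    add_zero, add_assoc, add_comm 1]

variable [MeasurableSpace Ω] [MeasurableSpace T] {P : Measure Ω} {μ : Measure T}

theorem ProbabilityTheory.iIndepFun.map_shift_eq_infinitePi (hmeas : ∀ i, Measurable (X i))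
    (hindep : iIndepFun X P) (hdist : ∀ i, P.map (X i) = μ) (s : ℕ) :
    P.map (fun ω j => X (s + j) ω) = Measure.infinitePi fun _ => μ := by
  simpa only [hdist] using
    (hindep.precomp (add_right_injective s)).map_fun_eq_infinitePi_map fun j => hmeas (s + j)

theorem measure_increasingRun [LT T] (hord : MeasurableSet {p : T × T | p.1 < p.2})
    (hmeas : ∀ i, Measurable (X i)) (hindep : iIndepFun X P) (hdist : ∀ i, P.map (X i) = μ)
    (s k : ℕ) : P (increasingRun X s k) = P (increasingRun X 0 k) := by
  set B : Set (ℕ → T) := {x | ∀ t < k, x t < x (t + 1)}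
  have hB : MeasurableSet B := by
    simp only [B, Set.ofPred_forall]
    exact .iInter fun t => .iInter fun _ =>
      measurableSet_setOf_lt hord (measurable_pi_apply t) (measurable_pi_apply (t + 1))
  have hshift (s : ℕ) : Measurable fun ω j => X (s + j) ω :=
    measurable_pi_lambda _ fun j => hmeas (s + j)
  change P ((fun ω j => X (s + j) ω) ⁻¹' B) = P ((fun ω j => X (0 + j) ω) ⁻¹' B)
  rw [← Measure.map_apply (hshift s) hB, ← Measure.map_apply (hshift 0) hB,
    hindep.map_shift_eq_infinitePi hmeas hdist, hindep.map_shift_eq_infinitePi hmeas hdist]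

end IncreasingRun

theorem stmt7_general {T Ω : Type*} [MeasurableSpace T] [PartialOrder T] [MeasurableSpace Ω]
    (hord : MeasurableSet {p : T × T | p.1 < p.2})
    (P : Measure Ω) (μ : Measure T)
    (X : ℕ → Ω → T) (hmeas : ∀ i, Measurable (X i))
    (hindep : iIndepFun X P)
    (hdist : ∀ i, P.map (X i) = μ)
    (L : ℕ → ENNReal)
    (hL : ∀ n, L n = P {ω | ∀ i j : ℕ, i < j → j < n → X i ω < X j ω})
    (i n : ℕ) (hi : 1 ≤ i) (hn : 1 ≤ n) :
    P {ω | ¬ X (i - 1) ω < X i ω ∧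
          (∀ j k : ℕ, i ≤ j → j < k → k < i + n → X j ω < X k ω) ∧
          ¬ X (i + n - 1) ω < X (i + n) ω}
        + 2 * L (n + 1)
      = L n + L (n + 2) := by
  obtain ⟨i, rfl⟩ := Nat.exists_eq_add_of_le' hi
  obtain ⟨n, rfl⟩ := Nat.exists_eq_add_of_le' hn
  have hrun (s k : ℕ) : P (increasingRun X s k) = L (k + 1) := by
    rw [measure_increasingRun hord hmeas hindep hdist, hL]
    congr 1
    ext ω
    simp only [mem_increasingRun_iff_forall_lt, zero_le, true_imp_iff, zero_add, Set.mem_ofPred_eq]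
  set a := {ω | X i ω < X (i + 1) ω}
  set R := increasingRun X (i + 1) n
  set b := {ω | X (i + 1 + n) ω < X (i + 1 + n + 1) ω}
  convert_to P (aᶜ ∩ R ∩ bᶜ) + 2 * L (n + 2) = L (n + 1) + L (n + 3) using 3
  · ext ω
    simp only [Set.mem_ofPred_eq, Set.mem_inter_iff, Set.mem_compl_iff, a, R, b,
      mem_increasingRun_iff_forall_lt, add_tsub_cancel_right, ← add_assoc, and_assoc]
  have haR : a ∩ R = increasingRun X i (n + 1) := (increasingRun_succ' i n).symm
  have hRb : R ∩ b = increasingRun X (i + 1) (n + 1) := (increasingRun_succ (i + 1) n).symm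
  have haRb : a ∩ R ∩ b = increasingRun X i (n + 2) := by
    rw [Set.inter_assoc, hRb]
    exact (increasingRun_succ' i (n + 1)).symm
  have hincl := measure_compl_inter_inter_compl_add P R
    (measurableSet_setOf_lt hord (hmeas i) (hmeas (i + 1)))
    (measurableSet_setOf_lt hord (hmeas (i + 1 + n)) (hmeas (i + 1 + n + 1)))
  rw [haRb, haR, hRb, hrun, hrun, hrun, hrun] at hincl
  rwa [two_mul]

/-- for i ≥ 1, n ≥ 1,
P(X_{i−1} ≮ Xᵢ < X_{i+1} < ... < X_{i+n−1} ≮ X_{i+n}) = Lₙ − 2Lₙ₊₁ + Lₙ₊₂,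
stated additively as P(...) + 2·Lₙ₊₁ = Lₙ + Lₙ₊₂. -/
theorem stmt7 {T Ω : Type*} [MeasurableSpace T] [PartialOrder T] [MeasurableSpace Ω]
    (hord : MeasurableSet {p : T × T | p.1 < p.2})
    (P : Measure Ω) [IsProbabilityMeasure P] (μ : Measure T)
    (X : ℕ → Ω → T) (hmeas : ∀ i, Measurable (X i))
    (hindep : iIndepFun X P)
    (hdist : ∀ i, P.map (X i) = μ)
    (L : ℕ → ENNReal)
    (hL : ∀ n, L n = P {ω | ∀ i j : ℕ, i < j → j < n → X i ω < X j ω})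
    (i n : ℕ) (hi : 1 ≤ i) (hn : 1 ≤ n) :
    P {ω | ¬ X (i - 1) ω < X i ω ∧
          (∀ j k : ℕ, i ≤ j → j < k → k < i + n → X j ω < X k ω) ∧
          ¬ X (i + n - 1) ω < X (i + n) ω}
        + 2 * L (n + 1)
      = L n + L (n + 2) :=
  stmt7_general hord P μ X hmeas hindep hdist L hL i n hi hn
end

section
/- Let {Xᵢ} be i.i.d. with law μ on a partial order, i ≥ 1, and L₂ = P(X₁ ≤ X₂) < 1. Then the conditional expectation of the run length Nᵢ given that a run starts at i (i.e., given X_{i−1} ≰ Xᵢ) equals 1/(1 − L₂). -/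
/-!
Write `L n = chainProb μ n` for the `μ^⊗n`-measure of the chains `x₀ ≤ ⋯ ≤ x_{n-1}`. By
independence and equal distribution, `X_j ≤ ⋯ ≤ X_{j+n-1}` has probability `L n` for every `j`.
Since `{X_{i-1} ≤ X_i} ∩ {X_i ≤ ⋯ ≤ X_{i+n}} = {X_{i-1} ≤ ⋯ ≤ X_{i+n}}`, the event that a run
starts at `i` and is longer than `n` has probability `L (n+1) - L (n+2)`. Summing over `n`
telescopes to `L 1 - lim L = 1`, where the limit vanishes because `L` is submultiplicative and
`L 2 < 1`. Dividing by `P(X_{i-1} ≰ X_i) = 1 - L 2` gives the claim.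
-/

open MeasureTheory ProbabilityTheory Filter
open scoped ENNReal

theorem ENNReal.iSup_natCast_eq_tsum_of_antitone {p : ℕ → Prop} [DecidablePred p]
    (hp : Antitone p) :
    ⨆ (n : ℕ) (_ : p n), (n : ℝ≥0∞) = ∑' n, if p (n + 1) then 1 else 0 := by
  have sum_of_holds {n : ℕ} (hn : p n) :
      ∑ k ∈ Finset.range n, (if p (k + 1) then 1 else 0 : ℝ≥0∞) = n := by
    rw [Finset.sum_congr rfl fun k hk => if_pos (hp (Finset.mem_range.1 hk) hn)]
    simp
  apply le_antisymm
  · exact iSup₂_le fun n hn => (sum_of_holds hn).symm.trans_le (ENNReal.sum_le_tsum _)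
  · refine ENNReal.tsum_le_of_sum_range_le fun N => ?_
    induction N with
    | zero => simp
    | succ N ih =>
      by_cases hN : p (N + 1)
      · exact (sum_of_holds hN).trans_le (le_iSup₂ (f := fun n (_ : p n) => (n : ℝ≥0∞)) _ hN)
      · rwa [Finset.sum_range_succ, if_neg hN, add_zero]

theorem ENNReal.tsum_tsub_succ_of_antitone {f : ℕ → ℝ≥0∞} (hf : Antitone f) :
    ∑' n, (f n - f (n + 1)) = f 0 - ⨅ n, f n := by
  have partial_sum (N : ℕ) : ∑ n ∈ Finset.range N, (f n - f (n + 1)) = f 0 - f N := by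
    induction N with
    | zero => simp
    | succ N ih =>
      rw [Finset.sum_range_succ, ih, tsub_add_tsub_cancel (hf N.zero_le) (hf N.le_succ)]
  rw [ENNReal.tsum_eq_iSup_nat, iSup_congr partial_sum, ENNReal.sub_iInf]

theorem MeasureTheory.lintegral_iSup_natCast_mem {Ω : Type*} [MeasurableSpace Ω]
    (ν : Measure Ω) {E : ℕ → Set Ω} (hE : Antitone E) (hmeas : ∀ n, MeasurableSet (E n)) :
    ∫⁻ ω, ⨆ (n : ℕ) (_ : ω ∈ E n), (n : ℝ≥0∞) ∂ν = ∑' n, ν (E (n + 1)) := by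
  classical
  have hsum (ω : Ω) :
      ⨆ (n : ℕ) (_ : ω ∈ E n), (n : ℝ≥0∞) = ∑' n, (E (n + 1)).indicator 1 ω := by
    rw [ENNReal.iSup_natCast_eq_tsum_of_antitone fun a b hab h => hE hab h]
    simp only [Set.indicator_apply, Pi.one_apply]
  simp_rw [hsum]
  rw [lintegral_tsum fun n => (measurable_one.indicator (hmeas _)).aemeasurable]
  simp only [lintegral_indicator_one (hmeas _)]

theorem measurableSet_setOf_monotone {ι T : Type*} [Countable ι] [Preorder ι] [Preorder T]
    [MeasurableSpace T] (hord : MeasurableSet {p : T × T | p.1 ≤ p.2}) :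
    MeasurableSet {v : ι → T | Monotone v} := by
  simp only [Monotone, Set.ofPred_forall]
  exact .iInter fun a => .iInter fun b => .iInter fun _ =>
    hord.preimage ((measurable_pi_apply a).prodMk (measurable_pi_apply b) :
      Measurable fun v : ι → T => (v a, v b))

theorem ProbabilityTheory.iIndepFun.indepFun_comp_of_disjoint_range
    {Ω ι ι₁ ι₂ T : Type*} [MeasurableSpace Ω] [MeasurableSpace T] [Fintype ι₁] [Fintype ι₂]
    {P : Measure Ω} {X : ι → Ω → T} (hindep : iIndepFun X P) (hmeas : ∀ i, Measurable (X i))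
    {f : ι₁ → ι} {g : ι₂ → ι} (hfg : Disjoint (Set.range f) (Set.range g)) :
    IndepFun (fun ω l => X (f l) ω) (fun ω l => X (g l) ω) P := by
  classical
  have hST : Disjoint (Finset.univ.image f) (Finset.univ.image g) := by
    rw [← Finset.disjoint_coe]
    simpa using hfg
  exact (hindep.indepFun_finset _ _ hST hmeas).comp
    (measurable_pi_lambda _ fun l => measurable_pi_apply ⟨f l, by simp⟩)
    (measurable_pi_lambda _ fun l => measurable_pi_apply ⟨g l, by simp⟩)

section RunLength

variable {T Ω : Type*} [Preorder T]

def chainFrom (X : ℕ → Ω → T) (j n : ℕ) : Set Ω :=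
  {ω | ∀ a b : ℕ, j ≤ a → a < b → b < j + n → X a ω ≤ X b ω}

/-- The run length `Nᵢ`; it is `⊤` where the chain starting at `i` never breaks. -/
noncomputable def runLength (X : ℕ → Ω → T) (i : ℕ) (ω : Ω) : ℝ≥0∞ :=
  ⨆ (n : ℕ) (_ : ω ∈ chainFrom X i n), (n : ℝ≥0∞)

variable {X : ℕ → Ω → T}

theorem chainFrom_eq_preimage (j n : ℕ) :
    chainFrom X j n = (fun ω (l : Fin n) => X (j + l) ω) ⁻¹' {v | Monotone v} := by
  ext ω
  simp only [chainFrom, Set.mem_preimage, Set.mem_ofPred_eq, monotone_iff_forall_lt]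
  constructor
  · intro h a b hab
    exact h _ _ (by omega) (by simpa using hab) (by omega)
  · intro h a b hja hab hbn
    obtain ⟨a, rfl⟩ := Nat.exists_eq_add_of_le hja
    obtain ⟨b, rfl⟩ := Nat.exists_eq_add_of_le (hja.trans hab.le)
    exact h (a := ⟨a, by omega⟩) (b := ⟨b, by omega⟩) (by simpa using hab)

theorem chainFrom_antitone (j : ℕ) : Antitone (chainFrom X j) :=
  fun _ _ hmn _ h a b hja hab hbn => h a b hja hab (by omega)

theorem chainFrom_two (j : ℕ) : chainFrom X j 2 = {ω | X j ω ≤ X (j + 1) ω} := by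
  ext ω
  refine ⟨fun h => h j (j + 1) le_rfl j.lt_succ_self (by omega), fun h a b hja hab hbn => ?_⟩
  obtain ⟨rfl, rfl⟩ : a = j ∧ b = j + 1 := by omega
  exact h

theorem chainFrom_two_inter (j n : ℕ) :
    chainFrom X j 2 ∩ chainFrom X (j + 1) (n + 1) = chainFrom X j (n + 2) := by
  ext ω
  refine ⟨fun ⟨hj, h⟩ a b hja hab hbn => ?_, fun h => ⟨?_, ?_⟩⟩
  · rcases hja.lt_or_eq with hja | rfl
    · exact h a b hja hab (by omega)
    rcases (Nat.succ_le_of_lt hab).lt_or_eq with hb | rfl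
    · exact (hj j (j + 1) le_rfl j.lt_succ_self (by omega)).trans (h _ _ le_rfl hb (by omega))
    · exact hj _ _ le_rfl hab (by omega)
  · exact fun a b hja hab hbn => h a b hja hab (by omega)
  · exact fun a b hja hab hbn => h a b (by omega) hab (by omega)

theorem chainFrom_add_subset (j m n : ℕ) :
    chainFrom X j (m + n) ⊆ chainFrom X j m ∩ chainFrom X (j + m) n :=
  fun _ h => ⟨fun a b hja hab hbn => h a b hja hab (by omega),
    fun a b hja hab hbn => h a b (by omega) hab (by omega)⟩

variable [MeasurableSpace T] [MeasurableSpace Ω]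

noncomputable def chainProb (μ : Measure T) (n : ℕ) : ℝ≥0∞ :=
  Measure.pi (fun _ : Fin n => μ) {v | Monotone v}

theorem chainProb_one {μ : Measure T} [IsProbabilityMeasure μ] : chainProb μ 1 = 1 := by
  simp [chainProb, Subsingleton.monotone]

theorem measurableSet_chainFrom (hord : MeasurableSet {p : T × T | p.1 ≤ p.2})
    (hmeas : ∀ i, Measurable (X i)) (j n : ℕ) : MeasurableSet (chainFrom X j n) := by
  rw [chainFrom_eq_preimage]
  exact measurable_pi_lambda _ (fun l => hmeas _) (measurableSet_setOf_monotone hord)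

variable {P : Measure Ω} {μ : Measure T}

theorem measure_chainFrom (hord : MeasurableSet {p : T × T | p.1 ≤ p.2})
    (hmeas : ∀ i, Measurable (X i)) (hindep : iIndepFun X P) (hdist : ∀ i, P.map (X i) = μ)
    (j n : ℕ) : P (chainFrom X j n) = chainProb μ n := by
  have hinj : Function.Injective fun l : Fin n => j + (l : ℕ) :=
    fun a b h => Fin.ext (Nat.add_left_cancel h)
  rw [chainFrom_eq_preimage, ← Measure.map_apply (measurable_pi_lambda _ fun l => hmeas _)
    (measurableSet_setOf_monotone hord),
    (hindep.precomp hinj).map_fun_eq_pi_map fun l => (hmeas _).aemeasurable]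
  simp only [hdist, chainProb]

theorem chainProb_antitone (hord : MeasurableSet {p : T × T | p.1 ≤ p.2})
    (hmeas : ∀ i, Measurable (X i)) (hindep : iIndepFun X P) (hdist : ∀ i, P.map (X i) = μ) :
    Antitone (chainProb μ) := fun m n hmn => by
  simp only [← measure_chainFrom hord hmeas hindep hdist 0]
  exact measure_mono (chainFrom_antitone 0 hmn)

theorem chainProb_add_le (hord : MeasurableSet {p : T × T | p.1 ≤ p.2})
    (hmeas : ∀ i, Measurable (X i)) (hindep : iIndepFun X P) (hdist : ∀ i, P.map (X i) = μ)
    (m n : ℕ) : chainProb μ (m + n) ≤ chainProb μ m * chainProb μ n := by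
  rw [← measure_chainFrom hord hmeas hindep hdist 0, ← measure_chainFrom hord hmeas hindep hdist 0,
    ← measure_chainFrom hord hmeas hindep hdist (0 + m)]
  have hdisj : Disjoint (Set.range fun l : Fin m => 0 + (l : ℕ))
      (Set.range fun l : Fin n => 0 + m + (l : ℕ)) := by
    rw [Set.disjoint_left]
    rintro _ ⟨a, rfl⟩ ⟨b, hb⟩
    have := a.isLt
    simp only at hb
    omega
  calc P (chainFrom X 0 (m + n)) ≤ P (chainFrom X 0 m ∩ chainFrom X (0 + m) n) :=
        measure_mono (chainFrom_add_subset 0 m n)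
    _ = P (chainFrom X 0 m) * P (chainFrom X (0 + m) n) := by
        rw [chainFrom_eq_preimage, chainFrom_eq_preimage]
        exact (hindep.indepFun_comp_of_disjoint_range hmeas hdisj).measure_inter_preimage_eq_mul
          _ _ (measurableSet_setOf_monotone hord) (measurableSet_setOf_monotone hord)

theorem iInf_chainProb_eq_zero (hord : MeasurableSet {p : T × T | p.1 ≤ p.2})
    (hmeas : ∀ i, Measurable (X i)) (hindep : iIndepFun X P) (hdist : ∀ i, P.map (X i) = μ)
    (h2 : chainProb μ 2 < 1) : ⨅ n, chainProb μ n = 0 := by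
  have hpow (k : ℕ) : chainProb μ (2 * k) ≤ chainProb μ 2 ^ k := by
    induction k with
    | zero => simp [chainProb, Subsingleton.monotone]
    | succ k ih =>
      rw [Nat.mul_succ, pow_succ]
      exact (chainProb_add_le hord hmeas hindep hdist _ _).trans (mul_le_mul_left ih _)
  exact le_antisymm (ge_of_tendsto' (ENNReal.tendsto_pow_atTop_nhds_zero_of_lt_one h2)
    fun k => (iInf_le _ (2 * k)).trans (hpow k)) zero_le

theorem measure_chainFrom_diff [IsFiniteMeasure P]
    (hord : MeasurableSet {p : T × T | p.1 ≤ p.2}) (hmeas : ∀ i, Measurable (X i))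
    (hindep : iIndepFun X P) (hdist : ∀ i, P.map (X i) = μ) (j n : ℕ) :
    P (chainFrom X (j + 1) (n + 1) \ chainFrom X j 2) =
      chainProb μ (n + 1) - chainProb μ (n + 2) := by
  have hmeas_inter := (measurableSet_chainFrom (X := X) hord hmeas j 2).inter
    (measurableSet_chainFrom hord hmeas (j + 1) (n + 1))
  rw [← Set.sdiff_inter_self_eq_sdiff,
    measure_sdiff Set.inter_subset_right hmeas_inter.nullMeasurableSet (measure_ne_top _ _),
    chainFrom_two_inter, measure_chainFrom hord hmeas hindep hdist,
    measure_chainFrom hord hmeas hindep hdist]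

theorem setLIntegral_compl_chainFrom_two_runLength [IsProbabilityMeasure P]
    (hord : MeasurableSet {p : T × T | p.1 ≤ p.2}) (hmeas : ∀ i, Measurable (X i))
    (hindep : iIndepFun X P) (hdist : ∀ i, P.map (X i) = μ) (h2 : chainProb μ 2 < 1) (j : ℕ) :
    ∫⁻ ω in (chainFrom X j 2)ᶜ, runLength X (j + 1) ω ∂P = 1 := by
  have hμ : IsProbabilityMeasure μ :=
    hdist 0 ▸ Measure.isProbabilityMeasure_map (hmeas 0).aemeasurable
  have hanti := chainProb_antitone hord hmeas hindep hdist
  have hinf : ⨅ n, chainProb μ (n + 1) = 0 :=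
    le_antisymm ((iInf_mono fun n => hanti n.le_succ).trans_eq
      (iInf_chainProb_eq_zero hord hmeas hindep hdist h2)) zero_le
  unfold runLength
  rw [lintegral_iSup_natCast_mem _ (chainFrom_antitone _)
    (measurableSet_chainFrom hord hmeas _)]
  simp only [Measure.restrict_apply (measurableSet_chainFrom hord hmeas _ _), ← Set.sdiff_eq,
    measure_chainFrom_diff hord hmeas hindep hdist]
  exact (ENNReal.tsum_tsub_succ_of_antitone (f := fun n => chainProb μ (n + 1))
    fun _ _ h => hanti (by omega)).trans (by rw [hinf, chainProb_one, tsub_zero])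

end RunLength

/-- for i ≥ 1 and L₂ = P(X₀ ≤ X₁) < 1, the conditional expectation of the
non-strict run length Nᵢ, given that a run starts at i (i.e. X_{i−1} ≰ Xᵢ), is 1/(1 − L₂). -/
theorem stmt10 {T Ω : Type*} [MeasurableSpace T] [PartialOrder T] [MeasurableSpace Ω]
    (hord : MeasurableSet {p : T × T | p.1 ≤ p.2})
    (P : Measure Ω) [IsProbabilityMeasure P] (μ : Measure T)
    (X : ℕ → Ω → T) (hmeas : ∀ i, Measurable (X i))
    (hindep : iIndepFun X P)
    (hdist : ∀ i, P.map (X i) = μ)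
    (i : ℕ) (hi : 1 ≤ i)
    (hL2 : P {ω | X 0 ω ≤ X 1 ω} < 1) :
    (∫⁻ ω in {ω | ¬ X (i - 1) ω ≤ X i ω},
        (⨆ (n : ℕ) (_ : ∀ j k : ℕ, i ≤ j → j < k → k < i + n → X j ω ≤ X k ω),
          (n : ENNReal)) ∂P)
      / P {ω | ¬ X (i - 1) ω ≤ X i ω}
    = (1 - P {ω | X 0 ω ≤ X 1 ω})⁻¹ := by
  obtain ⟨j, rfl⟩ : ∃ j, i = j + 1 := ⟨i - 1, by omega⟩
  have hL2_eq : P {ω | X 0 ω ≤ X 1 ω} = chainProb μ 2 := by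
    rw [← chainFrom_two, measure_chainFrom hord hmeas hindep hdist]
  have hstart : {ω | ¬ X (j + 1 - 1) ω ≤ X (j + 1) ω} = (chainFrom X j 2)ᶜ := by
    rw [chainFrom_two, Nat.add_sub_cancel]
    rfl
  have hrun := setLIntegral_compl_chainFrom_two_runLength hord hmeas hindep hdist
    (hL2_eq ▸ hL2) j
  rw [hstart, prob_compl_eq_one_sub (measurableSet_chainFrom hord hmeas _ _),
    measure_chainFrom hord hmeas hindep hdist, hL2_eq]
  exact (congrArg (· / _) hrun).trans (one_div _)
end

section
/- Let μ₁, μ₂ be finite measures on partial orders T₁, T₂ and let T₁ ⊗ T₂ be the ordinal (series) sum, where every element of T₁ is below every element of T₂, equipped with the measure μ₁ ⊗ μ₂ agreeing with μᵢ on Tᵢ. Then for every n ≥ 0, the strict run coefficient satisfies Lₙ(μ₁ ⊗ μ₂) = Σ_{k=0}^{n} Lₖ(μ₁)·L_{n−k}(μ₂), where Lₙ(μ) = μⁿ({a₁ < ... < aₙ}), L₀ = 1, L₁ = ‖μ‖. Equivalently, the generating series multiply: P_{μ₁⊗μ₂}(Z) = P_{μ₁}(Z)·P_{μ₂}(Z).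 -/
/-!
A strictly increasing tuple in `T₁ ⊕ₗ T₂` consists of `k` entries from `T₁` followed by `n - k`
entries from `T₂`, for a unique `k`. The tuples of this shape form a measurable box, and cutting
them at position `k` is a measure-preserving equivalence onto pairs of a `k`-tuple and an
`(n - k)`-tuple, under which the strictly increasing ones correspond exactly to pairs of strictly
increasing tuples in `T₁` and in `T₂`. The order is not assumed measurable, so all sets of
strictly increasing tuples are handled through outer measure: only the boxes are measurable.
-/

open MeasureTheory

/-- The n-th strict run coefficient Lₙ(μ) = μⁿ({a₁ < ... < aₙ}), with L₀ = 1, L₁ = ‖μ‖. -/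
noncomputable def runCoeff {T : Type*} [MeasurableSpace T] [Preorder T]
    (μ : Measure T) (n : ℕ) : ENNReal :=
  (Measure.pi fun _ : Fin n => μ) {f : Fin n → T | StrictMono f}

instance lexSumMeasurableSpace {T₁ T₂ : Type*} [MeasurableSpace T₁] [MeasurableSpace T₂] :
    MeasurableSpace (T₁ ⊕ₗ T₂) :=
  inferInstanceAs (MeasurableSpace (T₁ ⊕ T₂))

open Set

theorem MeasureTheory.Measure.apply_eq_sum_inter {α ι : Type*} [MeasurableSpace α]
    (μ : Measure α) {s : Finset ι} {C : ι → Set α} (hC : ∀ k, MeasurableSet (C k))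
    (hd : (s : Set ι).PairwiseDisjoint C) {A : Set α} (hA : A ⊆ ⋃ k ∈ s, C k) :
    μ A = ∑ k ∈ s, μ (A ∩ C k) := by
  conv_lhs => rw [← inter_eq_left.2 hA]
  rw [← Measure.restrict_apply' (Finset.measurableSet_biUnion s fun k _ => hC k),
    Measure.restrict_biUnion_finset hd hC, Measure.sum_apply_of_countable]
  simp_rw [Measure.restrict_apply' (hC _)]
  exact Finset.tsum_subtype s fun k => μ (A ∩ C k)

theorem MeasureTheory.Measure.pi_inter_univ_pi {ι α : Type*} [Fintype ι] [MeasurableSpace α]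
    (μ : Measure α) [SigmaFinite μ] {L : Set α} (hL : MeasurableSet L) (A : Set (ι → α)) :
    Measure.pi (fun _ : ι => μ) (A ∩ univ.pi fun _ => L)
      = Measure.pi (fun _ => μ.restrict L) A := by
  rw [← Measure.restrict_apply' (MeasurableSet.univ_pi fun _ => hL), Measure.restrict_pi_pi]

theorem MeasurableEmbedding.restrict_range_map_add_map {α β γ : Type*} [MeasurableSpace α]
    [MeasurableSpace β] [MeasurableSpace γ] {f : α → γ} {g : β → γ} (hf : MeasurableEmbedding f)
    (hg : Measurable g) (hfg : Disjoint (range f) (range g)) (μ : Measure α) (ν : Measure β) :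
    (μ.map f + ν.map g).restrict (range f) = μ.map f := by
  have hν : ν.map g (range f) = 0 := by
    rw [Measure.map_apply hg hf.measurableSet_range, preimage_eq_empty_iff.2 hfg, measure_empty]
  rw [Measure.restrict_add, Measure.restrict_eq_zero.2 hν, add_zero,
    Measure.restrict_eq_self_of_ae_mem (ae_map_mem_range _ hf.measurableSet_range _)]

theorem MeasurableEmbedding.piMap {ι : Type*} [Countable ι] {α β : ι → Type*}
    [∀ i, MeasurableSpace (α i)] [∀ i, MeasurableSpace (β i)] {f : ∀ i, α i → β i}
    (hf : ∀ i, MeasurableEmbedding (f i)) :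
    MeasurableEmbedding fun (x : ∀ i, α i) i => f i (x i) := by
  have hrange (x : range fun (x : ∀ i, α i) i => f i (x i)) (i : ι) : x.1 i ∈ range (f i) := by
    obtain ⟨y, hy⟩ := x.2
    exact ⟨y i, congrFun hy i⟩
  refine MeasurableEmbedding.of_measurable_inverse_on_range
    (g := fun x i => (hf i).equivRange.symm ⟨x.1 i, hrange x i⟩) ?_ ?_ ?_ ?_
  · exact measurable_pi_lambda _ fun i => (hf i).measurable.comp (measurable_pi_apply i)
  · have h : (range fun (x : ∀ i, α i) i => f i (x i)) = univ.pi fun i => range (f i) :=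
      range_piMap f
    rw [h]
    exact MeasurableSet.univ_pi fun i => (hf i).measurableSet_range
  · exact measurable_pi_lambda _ fun i => (hf i).equivRange.symm.measurable.comp
      ((measurable_pi_apply i).comp measurable_subtype_coe).subtype_mk
  · intro x
    funext i
    exact (hf i).equivRange_symm_apply_mk (x i)

def MeasurableEquiv.finAppend (α : Type*) [MeasurableSpace α] (m n : ℕ) :
    (Fin m → α) × (Fin n → α) ≃ᵐ (Fin (m + n) → α) :=
  (MeasurableEquiv.sumPiEquivProdPi fun _ : Fin m ⊕ Fin n => α).symm.trans
    (MeasurableEquiv.piCongrLeft (fun _ => α) finSumFinEquiv)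

theorem MeasurableEquiv.coe_finAppend (α : Type*) [MeasurableSpace α] (m n : ℕ) :
    ⇑(MeasurableEquiv.finAppend α m n) = fun p => Fin.append p.1 p.2 := by
  funext p i
  refine Fin.addCases (fun i => ?_) (fun j => ?_) i
  · rw [Fin.append_left, ← finSumFinEquiv_apply_left, finAppend, trans_apply,
      piCongrLeft_apply_apply]
    rfl
  · rw [Fin.append_right, ← finSumFinEquiv_apply_right, finAppend, trans_apply,
      piCongrLeft_apply_apply]
    rfl

theorem MeasureTheory.measurePreserving_finAppend {α : Type*} [MeasurableSpace α]
    (μ : Measure α) [SigmaFinite μ] (m n : ℕ) :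
    MeasurePreserving (MeasurableEquiv.finAppend α m n)
      ((Measure.pi fun _ : Fin m => μ).prod (Measure.pi fun _ : Fin n => μ))
      (Measure.pi fun _ : Fin (m + n) => μ) :=
  (measurePreserving_piCongrLeft (fun _ => μ) finSumFinEquiv).comp
    (measurePreserving_sumPiEquivProdPi_symm fun _ => μ)

theorem Fin.castAdd_lt_natAdd {m n : ℕ} (i : Fin m) (j : Fin n) : castAdd n i < natAdd m j :=
  Fin.lt_def.2 (by simp only [val_castAdd, val_natAdd]; omega)

theorem Fin.strictMono_append_iff {α : Type*} [Preorder α] {m n : ℕ} (g : Fin m → α)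
    (h : Fin n → α) :
    StrictMono (Fin.append g h) ↔ StrictMono g ∧ StrictMono h ∧ ∀ i j, g i < h j := by
  refine ⟨fun hgh => ⟨?_, ?_, fun i j => ?_⟩, fun ⟨hg, hh, hgh⟩ a b hab => ?_⟩
  · simpa [Function.comp_def] using hgh.comp (Fin.strictMono_castAdd n)
  · simpa [Function.comp_def] using hgh.comp (Fin.strictMono_natAdd m)
  · simpa using hgh (castAdd_lt_natAdd i j)
  · induction a using Fin.addCases with
    | left i => induction b using Fin.addCases with
      | left j => simpa using hg ((Fin.strictMono_castAdd n).lt_iff_lt.1 hab)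
      | right j => simpa using hgh i j
    | right i => induction b using Fin.addCases with
      | left j => exact absurd hab (castAdd_lt_natAdd j i).not_gt
      | right j => simpa using hh (by simpa using hab)

theorem runCoeff_map {T X : Type*} [MeasurableSpace T] [MeasurableSpace X] [Preorder T]
    [Preorder X] (μ : Measure T) [SigmaFinite μ] {ι : T → X} (hι : MeasurableEmbedding ι)
    (hlt : ∀ a b, ι a < ι b ↔ a < b) (n : ℕ) :
    runCoeff (μ.map ι) n = runCoeff μ n := by
  have : SigmaFinite (μ.map ι) := hι.sigmaFinite_map
  rw [runCoeff, ← Measure.pi_map_pi fun _ => hι.measurable.aemeasurable,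
    (MeasurableEmbedding.piMap fun _ => hι).map_apply]
  congr 1
  ext g
  simp only [mem_preimage, mem_ofPred_eq, StrictMono, hlt]

namespace Sum.Lex

variable {T₁ T₂ : Type*}

theorem compl_range_toLex_inl :
    (range (toLex ∘ Sum.inl : T₁ → T₁ ⊕ₗ T₂))ᶜ = range (toLex ∘ Sum.inr) :=
  compl_range_inl

def switchesAt {n : ℕ} (k : ℕ) : Set (Fin n → T₁ ⊕ₗ T₂) :=
  univ.pi fun i => if (i : ℕ) < k then range (toLex ∘ Sum.inl) else range (toLex ∘ Sum.inr)

theorem mem_switchesAt {n k : ℕ} {f : Fin n → T₁ ⊕ₗ T₂} :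
    f ∈ switchesAt k ↔ ∀ i, f i ∈ range (toLex ∘ Sum.inl) ↔ (i : ℕ) < k := by
  simp only [switchesAt, mem_univ_pi]
  refine forall_congr' fun i => ?_
  rw [← compl_range_toLex_inl]
  split_ifs with h <;> simp [h]

theorem pairwiseDisjoint_switchesAt (n : ℕ) :
    ((Finset.range (n + 1) : Finset ℕ) : Set ℕ).PairwiseDisjoint
      (switchesAt : ℕ → Set (Fin n → T₁ ⊕ₗ T₂)) := by
  intro k hk l hl hkl
  simp only [Finset.coe_range, mem_Iio] at hk hl
  refine Set.disjoint_left.2 fun f hfk hfl => ?_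
  rw [mem_switchesAt] at hfk hfl
  have := (hfk ⟨min k l, by omega⟩).symm.trans (hfl ⟨min k l, by omega⟩)
  simp only at this
  omega

section Order

variable [Preorder T₁] [Preorder T₂]

theorem isLowerSet_preimage_range_inl {n : ℕ} {f : Fin n → T₁ ⊕ₗ T₂} (hf : Monotone f) :
    IsLowerSet {i | f i ∈ range (toLex ∘ Sum.inl)} := by
  rintro i j hji ⟨a, ha⟩
  by_contra hj
  obtain ⟨b, hb⟩ : f j ∈ range (toLex ∘ Sum.inr) := compl_range_toLex_inl ▸ hj
  have hle := hf hji
  rw [← ha, ← hb] at hle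
  exact Sum.Lex.not_inr_le_inl hle

theorem setOf_strictMono_subset_biUnion_switchesAt (n : ℕ) :
    {f : Fin n → T₁ ⊕ₗ T₂ | StrictMono f} ⊆ ⋃ k ∈ Finset.range (n + 1), switchesAt k := by
  intro f hf
  simp only [mem_iUnion, Finset.mem_range, exists_prop, Nat.lt_succ_iff, mem_switchesAt]
  rcases (isLowerSet_preimage_range_inl hf.monotone).eq_univ_or_Iio with h | ⟨a, h⟩
  · exact ⟨n, le_rfl, fun i => by simpa using Set.ext_iff.1 h i⟩
  · exact ⟨a, a.is_le', fun i => by rw [← Fin.lt_def]; exact Set.ext_iff.1 h i⟩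

theorem lt_of_mem_range_inl_of_notMem {x y : T₁ ⊕ₗ T₂} (hx : x ∈ range (toLex ∘ Sum.inl))
    (hy : y ∉ range (toLex ∘ Sum.inl)) : x < y := by
  obtain ⟨a, rfl⟩ := hx
  obtain ⟨b, rfl⟩ : y ∈ range (toLex ∘ Sum.inr) := compl_range_toLex_inl ▸ hy
  exact Sum.Lex.inl_lt_inr a b

theorem append_preimage_strictMono_inter_switchesAt (k m : ℕ) :
    (fun p : (Fin k → T₁ ⊕ₗ T₂) × (Fin m → T₁ ⊕ₗ T₂) => Fin.append p.1 p.2) ⁻¹'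
        ({f | StrictMono f} ∩ switchesAt k)
      = ({g | StrictMono g} ∩ univ.pi fun _ => range (toLex ∘ Sum.inl)) ×ˢ
        ({h | StrictMono h} ∩ univ.pi fun _ => range (toLex ∘ Sum.inr)) := by
  ext ⟨g, h⟩
  simp only [mem_preimage, mem_inter_iff, mem_ofPred_eq, mem_prod, mem_univ_pi, mem_switchesAt,
    Fin.strictMono_append_iff, Fin.forall_fin_add, Fin.append_left, Fin.append_right,
    Fin.val_castAdd, Fin.val_natAdd, Fin.is_lt, iff_true, ← compl_range_toLex_inl,
    mem_compl_iff, show ∀ j : ℕ, ¬k + j < k by omega, iff_false]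
  exact ⟨fun ⟨⟨hg, hh, _⟩, hgL, hhR⟩ => ⟨⟨hg, hgL⟩, hh, hhR⟩,
    fun ⟨⟨hg, hgL⟩, hh, hhR⟩ =>
      ⟨⟨hg, hh, fun i j => lt_of_mem_range_inl_of_notMem (hgL i) (hhR j)⟩, hgL, hhR⟩⟩

end Order

variable [MeasurableSpace T₁] [MeasurableSpace T₂]

theorem measurableEmbedding_toLex_inl :
    MeasurableEmbedding (toLex ∘ Sum.inl : T₁ → T₁ ⊕ₗ T₂) :=
  ⟨Sum.inl_injective, measurable_inl, fun _ hs => hs.inl_image⟩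

theorem measurableEmbedding_toLex_inr :
    MeasurableEmbedding (toLex ∘ Sum.inr : T₂ → T₁ ⊕ₗ T₂) :=
  ⟨Sum.inr_injective, measurable_inr, fun _ hs => hs.inr_image⟩

theorem measurableSet_switchesAt (n k : ℕ) :
    MeasurableSet (switchesAt k : Set (Fin n → T₁ ⊕ₗ T₂)) := by
  refine MeasurableSet.univ_pi fun i => ?_
  split_ifs
  · exact measurableEmbedding_toLex_inl.measurableSet_range
  · exact measurableEmbedding_toLex_inr.measurableSet_range

end Sum.Lex

namespace MeasureTheory.Measure

variable {T₁ T₂ : Type*} [MeasurableSpace T₁] [MeasurableSpace T₂]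

noncomputable def sumLex (μ₁ : Measure T₁) (μ₂ : Measure T₂) : Measure (T₁ ⊕ₗ T₂) :=
  μ₁.map (toLex ∘ Sum.inl) + μ₂.map (toLex ∘ Sum.inr)

instance sigmaFinite_sumLex (μ₁ : Measure T₁) (μ₂ : Measure T₂) [SigmaFinite μ₁]
    [SigmaFinite μ₂] : SigmaFinite (μ₁.sumLex μ₂) :=
  have := (Sum.Lex.measurableEmbedding_toLex_inl (T₂ := T₂)).sigmaFinite_map (μ := μ₁)
  have := (Sum.Lex.measurableEmbedding_toLex_inr (T₁ := T₁)).sigmaFinite_map (μ := μ₂)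
  Add.sigmaFinite _ _

theorem sumLex_restrict_range_inl (μ₁ : Measure T₁) (μ₂ : Measure T₂) :
    (μ₁.sumLex μ₂).restrict (range (toLex ∘ Sum.inl)) = μ₁.map (toLex ∘ Sum.inl) :=
  Sum.Lex.measurableEmbedding_toLex_inl.restrict_range_map_add_map measurable_inr
    isCompl_range_inl_range_inr.disjoint μ₁ μ₂

theorem sumLex_restrict_range_inr (μ₁ : Measure T₁) (μ₂ : Measure T₂) :
    (μ₁.sumLex μ₂).restrict (range (toLex ∘ Sum.inr)) = μ₂.map (toLex ∘ Sum.inr) := by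
  rw [sumLex, add_comm]
  exact Sum.Lex.measurableEmbedding_toLex_inr.restrict_range_map_add_map measurable_inl
    isCompl_range_inl_range_inr.disjoint.symm μ₂ μ₁

variable [Preorder T₁] [Preorder T₂]

theorem pi_sumLex_strictMono_inter_switchesAt (μ₁ : Measure T₁) (μ₂ : Measure T₂)
    [SigmaFinite μ₁] [SigmaFinite μ₂] (k m : ℕ) :
    Measure.pi (fun _ : Fin (k + m) => μ₁.sumLex μ₂)
        ({f | StrictMono f} ∩ Sum.Lex.switchesAt k)
      = runCoeff μ₁ k * runCoeff μ₂ m := by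
  rw [← (measurePreserving_finAppend _ k m).map_eq, MeasurableEquiv.map_apply,
    MeasurableEquiv.coe_finAppend, Sum.Lex.append_preimage_strictMono_inter_switchesAt,
    prod_prod, pi_inter_univ_pi _ Sum.Lex.measurableEmbedding_toLex_inl.measurableSet_range,
    pi_inter_univ_pi _ Sum.Lex.measurableEmbedding_toLex_inr.measurableSet_range,
    sumLex_restrict_range_inl, sumLex_restrict_range_inr]
  exact congr_arg₂ (· * ·)
    (runCoeff_map (X := T₁ ⊕ₗ T₂) μ₁ Sum.Lex.measurableEmbedding_toLex_inl
      (fun _ _ => Sum.Lex.inl_lt_inl_iff) k)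
    (runCoeff_map (X := T₁ ⊕ₗ T₂) μ₂ Sum.Lex.measurableEmbedding_toLex_inr
      (fun _ _ => Sum.Lex.inr_lt_inr_iff) m)

theorem runCoeff_sumLex (μ₁ : Measure T₁) (μ₂ : Measure T₂) [SigmaFinite μ₁] [SigmaFinite μ₂]
    (n : ℕ) :
    runCoeff (μ₁.sumLex μ₂) n
      = ∑ k ∈ Finset.range (n + 1), runCoeff μ₁ k * runCoeff μ₂ (n - k) := by
  rw [runCoeff, apply_eq_sum_inter _ (Sum.Lex.measurableSet_switchesAt n)
    (Sum.Lex.pairwiseDisjoint_switchesAt n)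
    (Sum.Lex.setOf_strictMono_subset_biUnion_switchesAt n)]
  refine Finset.sum_congr rfl fun k hk => ?_
  obtain ⟨m, rfl⟩ : ∃ m, n = k + m :=
    ⟨n - k, (Nat.add_sub_of_le (Finset.mem_range_succ_iff.1 hk)).symm⟩
  rw [Nat.add_sub_cancel_left, pi_sumLex_strictMono_inter_switchesAt]

end MeasureTheory.Measure

/-- for the ordinal (series) sum T₁ ⊗ T₂ (here `T₁ ⊕ₗ T₂`), equipped with the
measure agreeing with μ₁ on T₁ and μ₂ on T₂, the strict run coefficients satisfy
Lₙ(μ₁ ⊗ μ₂) = Σ_{k=0}^{n} Lₖ(μ₁)·L_{n−k}(μ₂), i.e. the generating series multiply. -/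
theorem stmt16 {T₁ T₂ : Type*} [MeasurableSpace T₁] [MeasurableSpace T₂]
    [PartialOrder T₁] [PartialOrder T₂]
    (μ₁ : Measure T₁) (μ₂ : Measure T₂) [IsFiniteMeasure μ₁] [IsFiniteMeasure μ₂] (n : ℕ) :
    runCoeff ((μ₁.map (toLex ∘ Sum.inl) + μ₂.map (toLex ∘ Sum.inr) : Measure (T₁ ⊕ₗ T₂))) n
      = ∑ k ∈ Finset.range (n + 1), runCoeff μ₁ k * runCoeff μ₂ (n - k) :=
  Measure.runCoeff_sumLex μ₁ μ₂ n
end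

section
/- Let μ₁, μ₂ be finite measures on a partial order T with measurable order, and define Lₙ(μ) = μⁿ({a₁ < ... < aₙ}). Then for every n ≥ 1, |Lₙ(μ₁) − Lₙ(μ₂)| ≤ ‖μ₁ − μ₂‖ · Σ_{k=0}^{n−1} Lₖ(μ₁)·L_{n−k−1}(μ₂), where ‖·‖ is the total variation norm. -/
open MeasureTheory

/-! Write the Jordan decomposition μ₁ − μ₂ = p − q as the identity μ₁ + q = μ₂ + p of
nonnegative measures, so that no signed product measure is needed. Integrating out the largest
element y of a chain expresses Lₙ₊₁(μ) as the μ-integral of the mass of the n-chains below y;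
substituting μ₁ + q = μ₂ + p in that integral and inducting on n gives
Lₙ(μ₁) ≤ Lₙ(μ₂) + p(T) · Σₖ Lₖ(μ₂) Lₙ₋ₖ₋₁(μ₁), and symmetrically with the roles of μ₁, μ₂ and
p, q exchanged. Both p(T) and q(T) are at most ‖μ₁ − μ₂‖ = p(T) + q(T). -/

open scoped ENNReal

section Chains

variable {T : Type*} [Preorder T]

theorem Fin.strictMono_snoc_iff {n : ℕ} {g : Fin n → T} {y : T} :
    StrictMono (Fin.snoc g y : Fin (n + 1) → T) ↔ StrictMono g ∧ ∀ i, g i < y := by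
  constructor
  · intro h
    refine ⟨fun i j hij => ?_, fun i => ?_⟩
    · simpa using h (Fin.castSucc_lt_castSucc_iff.mpr hij)
    · simpa using h (Fin.castSucc_lt_last i)
  · rintro ⟨hg, hy⟩ i j hij
    obtain ⟨i, rfl⟩ := Fin.exists_castSucc_eq.mpr (Fin.ne_last_of_lt hij)
    induction j using Fin.lastCases with
    | last => simpa using hy i
    | cast j => simpa using hg (Fin.castSucc_lt_castSucc_iff.mp hij)

def chainsBelow (n : ℕ) (z : WithTop T) : Set (Fin n → T) :=
  {f | StrictMono f} ∩ Set.univ.pi fun _ => {y | (y : WithTop T) < z}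

theorem chainsBelow_top (n : ℕ) : chainsBelow n (⊤ : WithTop T) = {f | StrictMono f} := by
  ext f
  simp [chainsBelow]

theorem chainsBelow_zero (z : WithTop T) : chainsBelow 0 z = Set.univ :=
  Set.eq_univ_of_forall fun _ => ⟨fun i => i.elim0, fun i => i.elim0⟩

theorem snoc_mem_chainsBelow_iff {n : ℕ} {z : WithTop T} {g : Fin n → T} {y : T} :
    (Fin.snoc g y : Fin (n + 1) → T) ∈ chainsBelow (n + 1) z ↔
      (y : WithTop T) < z ∧ g ∈ chainsBelow n y := by
  simp only [chainsBelow, Set.mem_inter_iff, Set.mem_univ_pi, Set.mem_ofPred_eq,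
    Fin.strictMono_snoc_iff, WithTop.coe_lt_coe, Fin.forall_fin_succ', Fin.snoc_castSucc,
    Fin.snoc_last]
  constructor
  · rintro ⟨⟨hg, hgy⟩, -, hy⟩
    exact ⟨hy, hg, hgy⟩
  · rintro ⟨hy, hg, hgy⟩
    exact ⟨⟨hg, hgy⟩, fun i => (WithTop.coe_lt_coe.mpr (hgy i)).trans hy, hy⟩

end Chains

section Measurability

variable {T : Type*} [MeasurableSpace T] [Preorder T]

theorem measurableSet_coe_lt (hord : MeasurableSet {p : T × T | p.1 < p.2}) (z : WithTop T) :
    MeasurableSet {y : T | (y : WithTop T) < z} := by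
  induction z using WithTop.recTopCoe with
  | top => simp
  | coe t =>
    simp only [WithTop.coe_lt_coe]
    exact hord.preimage (measurable_id.prodMk measurable_const)

theorem measurableSet_strictMono (hord : MeasurableSet {p : T × T | p.1 < p.2}) (n : ℕ) :
    MeasurableSet {f : Fin n → T | StrictMono f} := by
  have h : {f : Fin n → T | StrictMono f} = ⋂ i, ⋂ j, ⋂ (_ : i < j), {f | f i < f j} := by
    ext f
    simp [StrictMono]
  rw [h]
  exact .iInter fun i => .iInter fun j => .iInter fun _ =>
    show MeasurableSet ((fun f : Fin n → T => (f i, f j)) ⁻¹' {p | p.1 < p.2}) from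
      hord.preimage ((measurable_pi_apply i).prodMk (measurable_pi_apply j))

theorem measurableSet_chainsBelow (hord : MeasurableSet {p : T × T | p.1 < p.2}) (n : ℕ)
    (z : WithTop T) : MeasurableSet (chainsBelow n z) :=
  (measurableSet_strictMono hord n).inter (.univ_pi fun _ => measurableSet_coe_lt hord z)

theorem measurableSet_chainsBelow_graph (hord : MeasurableSet {p : T × T | p.1 < p.2}) (n : ℕ) :
    MeasurableSet {p : T × (Fin n → T) | p.2 ∈ chainsBelow n p.1} := by
  have h : {p : T × (Fin n → T) | p.2 ∈ chainsBelow n p.1} = Prod.snd ⁻¹' {f | StrictMono f} ∩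
      ⋂ i, (fun p : T × (Fin n → T) => (p.2 i, p.1)) ⁻¹' {q | q.1 < q.2} := by
    ext p
    simp [chainsBelow]
  rw [h]
  exact ((measurableSet_strictMono hord n).preimage measurable_snd).inter <| .iInter fun i =>
    hord.preimage (((measurable_pi_apply i).comp measurable_snd).prodMk measurable_fst)

end Measurability

section RunCoeffBelow

variable {T : Type*} [MeasurableSpace T] [Preorder T]

noncomputable def runCoeffBelow (μ : Measure T) (n : ℕ) (z : WithTop T) : ℝ≥0∞ :=
  (Measure.pi fun _ : Fin n => μ) (chainsBelow n z)

theorem runCoeffBelow_top (μ : Measure T) (n : ℕ) : runCoeffBelow μ n ⊤ = runCoeff μ n := by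
  rw [runCoeffBelow, chainsBelow_top, runCoeff]

theorem runCoeffBelow_zero (μ : Measure T) (z : WithTop T) : runCoeffBelow μ 0 z = 1 := by
  simp [runCoeffBelow, chainsBelow_zero]

theorem runCoeffBelow_le_runCoeff (μ : Measure T) (n : ℕ) (z : WithTop T) :
    runCoeffBelow μ n z ≤ runCoeff μ n :=
  measure_mono fun _ hf => hf.1

theorem measurable_runCoeffBelow (hord : MeasurableSet {p : T × T | p.1 < p.2})
    (μ : Measure T) [SigmaFinite μ] (n : ℕ) :
    Measurable fun y : T => runCoeffBelow μ n y :=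
  measurable_measure_prodMk_left (measurableSet_chainsBelow_graph hord n)

theorem runCoeffBelow_succ (hord : MeasurableSet {p : T × T | p.1 < p.2})
    (μ : Measure T) [SigmaFinite μ] (n : ℕ) (z : WithTop T) :
    runCoeffBelow μ (n + 1) z = ∫⁻ y in {y : T | (y : WithTop T) < z}, runCoeffBelow μ n y ∂μ := by
  let e := MeasurableEquiv.piFinSuccAbove (fun _ : Fin (n + 1) => T) (Fin.last n)
  have he : ∀ y (g : Fin n → T), e.symm (y, g) = Fin.snoc g y := fun y g => by
    simp [e, MeasurableEquiv.piFinSuccAbove_symm_apply, Fin.insertNthEquiv, Fin.insertNth_last']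
  rw [runCoeffBelow,
    ← (measurePreserving_piFinSuccAbove (fun _ => μ) (Fin.last n)).symm.measure_preimage_equiv,
    Measure.prod_apply ((measurableSet_chainsBelow hord _ z).preimage e.symm.measurable),
    ← lintegral_indicator (measurableSet_coe_lt hord z)]
  refine lintegral_congr fun y => ?_
  by_cases hy : y ∈ {y : T | (y : WithTop T) < z}
  · rw [Set.indicator_of_mem hy, runCoeffBelow]
    congr 1
    ext g
    simp only [Set.mem_preimage, he, snoc_mem_chainsBelow_iff]
    exact and_iff_right hy
  · rw [Set.indicator_of_notMem hy]
    convert measure_empty (μ := Measure.pi fun _ : Fin n => μ)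
    ext g
    simp only [Set.mem_preimage, he, snoc_mem_chainsBelow_iff, Set.mem_empty_iff_false,
      iff_false]
    exact fun h => hy h.1

end RunCoeffBelow

theorem lintegral_le_add_of_add_eq {α : Type*} [MeasurableSpace α] {μ ν p q : Measure α}
    (h : μ + q = ν + p) (f : α → ℝ≥0∞) :
    ∫⁻ y, f y ∂μ ≤ ∫⁻ y, f y ∂ν + ∫⁻ y, f y ∂p :=
  calc ∫⁻ y, f y ∂μ ≤ ∫⁻ y, f y ∂(μ + q) := lintegral_mono' (Measure.le_add_right le_rfl) le_rfl
    _ = ∫⁻ y, f y ∂ν + ∫⁻ y, f y ∂p := by rw [h, lintegral_add_measure]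

theorem sum_range_mul_reflect_comm {R : Type*} [CommSemiring R] (f g : ℕ → R) (n : ℕ) :
    ∑ k ∈ Finset.range n, f k * g (n - k - 1) = ∑ k ∈ Finset.range n, g k * f (n - k - 1) := by
  rw [← Finset.sum_range_reflect]
  refine Finset.sum_congr rfl fun k hk => ?_
  rw [Finset.mem_range] at hk
  rw [mul_comm]
  congr 2 <;> omega

theorem ENNReal.abs_toReal_sub_le_of_le_add {a b c : ℝ≥0∞} (hb : b ≠ ∞) (hc : c ≠ ∞)
    (hab : a ≤ b + c) (hba : b ≤ a + c) : |a.toReal - b.toReal| ≤ c.toReal := by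
  have ha : a ≠ ∞ := ne_top_of_le_ne_top (add_ne_top.2 ⟨hb, hc⟩) hab
  rw [abs_sub_le_iff, sub_le_iff_le_add, sub_le_iff_le_add, ← toReal_add hc hb,
    ← toReal_add hc ha, add_comm c, add_comm c]
  exact ⟨toReal_mono (add_ne_top.2 ⟨hb, hc⟩) hab, toReal_mono (add_ne_top.2 ⟨ha, hc⟩) hba⟩

theorem add_negPart_eq_add_posPart {α : Type*} [MeasurableSpace α] (μ₁ μ₂ : Measure α)
    [IsFiniteMeasure μ₁] [IsFiniteMeasure μ₂] :
    μ₁ + (μ₁.toSignedMeasure - μ₂.toSignedMeasure).toJordanDecomposition.negPart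
      = μ₂ + (μ₁.toSignedMeasure - μ₂.toSignedMeasure).toJordanDecomposition.posPart := by
  have hJ := (μ₁.toSignedMeasure - μ₂.toSignedMeasure).toSignedMeasure_toJordanDecomposition
  rw [← Measure.toSignedMeasure_eq_toSignedMeasure_iff, Measure.toSignedMeasure_add,
    Measure.toSignedMeasure_add, add_comm μ₂.toSignedMeasure]
  exact (sub_eq_sub_iff_add_eq_add.mp hJ).symm

section Perturbation

variable {T : Type*} [MeasurableSpace T] [Preorder T]

theorem runCoeff_ne_top (μ : Measure T) [IsFiniteMeasure μ] (n : ℕ) : runCoeff μ n ≠ ∞ :=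
  measure_ne_top _ _

/-- Bounding chains below `z`, rather than all chains, is what lets the induction pass through
Fubini in the last coordinate. -/
theorem runCoeffBelow_le_add_of_add_eq (hord : MeasurableSet {p : T × T | p.1 < p.2})
    {μ ν p q : Measure T} [SigmaFinite μ] [SigmaFinite ν] (h : μ + q = ν + p) (n : ℕ)
    (z : WithTop T) :
    runCoeffBelow μ n z ≤ runCoeffBelow ν n z +
      p Set.univ * ∑ k ∈ Finset.range n, runCoeffBelow ν k z * runCoeff μ (n - k - 1) := by
  induction n generalizing z with
  | zero => simp [runCoeffBelow_zero]
  | succ n ih =>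
    set O := {y : T | (y : WithTop T) < z}
    have hrestr : μ.restrict O + q.restrict O = ν.restrict O + p.restrict O := by
      rw [← Measure.restrict_add, h, Measure.restrict_add]
    have hν := fun k => measurable_runCoeffBelow hord ν k
    calc runCoeffBelow μ (n + 1) z
        = ∫⁻ y in O, runCoeffBelow μ n y ∂μ := runCoeffBelow_succ hord μ n z
      _ ≤ ∫⁻ y in O, runCoeffBelow μ n y ∂ν + ∫⁻ y in O, runCoeffBelow μ n y ∂p :=
          lintegral_le_add_of_add_eq hrestr _
      _ ≤ ∫⁻ y in O, (runCoeffBelow ν n y + p Set.univ *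
            ∑ k ∈ Finset.range n, runCoeffBelow ν k y * runCoeff μ (n - k - 1)) ∂ν
          + ∫⁻ y in O, runCoeff μ n ∂p := by
          gcongr with y y
          · exact ih y
          · exact runCoeffBelow_le_runCoeff μ n y
      _ ≤ runCoeffBelow ν (n + 1) z + p Set.univ *
            ∑ k ∈ Finset.range n, runCoeffBelow ν (k + 1) z * runCoeff μ (n - k - 1)
          + runCoeff μ n * p Set.univ := by
          rw [lintegral_add_left (hν n), lintegral_const_mul _ (by fun_prop),
            lintegral_finsetSum _ fun k _ => by fun_prop, setLIntegral_const]
          simp_rw [lintegral_mul_const _ (hν _), O, ← runCoeffBelow_succ hord ν]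
          gcongr
          exact Set.subset_univ O
      _ = runCoeffBelow ν (n + 1) z + p Set.univ *
            ∑ k ∈ Finset.range (n + 1), runCoeffBelow ν k z * runCoeff μ (n + 1 - k - 1) := by
          simp only [Finset.sum_range_succ', runCoeffBelow_zero, Nat.add_sub_add_right,
            Nat.sub_zero, Nat.add_sub_cancel]
          ring

theorem runCoeff_le_add_of_add_eq (hord : MeasurableSet {p : T × T | p.1 < p.2})
    {μ ν p q : Measure T} [SigmaFinite μ] [SigmaFinite ν] (h : μ + q = ν + p) (n : ℕ) :
    runCoeff μ n ≤ runCoeff ν n +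
      p Set.univ * ∑ k ∈ Finset.range n, runCoeff ν k * runCoeff μ (n - k - 1) := by
  simpa only [runCoeffBelow_top] using runCoeffBelow_le_add_of_add_eq hord h n ⊤

end Perturbation

theorem stmt18_general {T : Type*} [MeasurableSpace T] [PartialOrder T]
    (hord : MeasurableSet {p : T × T | p.1 < p.2})
    (μ₁ μ₂ : Measure T) [IsFiniteMeasure μ₁] [IsFiniteMeasure μ₂]
    (n : ℕ) :
    |(runCoeff μ₁ n).toReal - (runCoeff μ₂ n).toReal|
      ≤ ((μ₁.toSignedMeasure - μ₂.toSignedMeasure).totalVariation Set.univ).toReal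
        * ∑ k ∈ Finset.range n, (runCoeff μ₁ k).toReal * (runCoeff μ₂ (n - k - 1)).toReal := by
  set s := μ₁.toSignedMeasure - μ₂.toSignedMeasure
  set S := ∑ k ∈ Finset.range n, runCoeff μ₁ k * runCoeff μ₂ (n - k - 1)
  have hfin : ∀ k m, runCoeff μ₁ k * runCoeff μ₂ m ≠ ∞ := fun k m =>
    ENNReal.mul_ne_top (runCoeff_ne_top μ₁ k) (runCoeff_ne_top μ₂ m)
  have hp : s.toJordanDecomposition.posPart Set.univ ≤ s.totalVariation Set.univ := le_self_add
  have hq : s.toJordanDecomposition.negPart Set.univ ≤ s.totalVariation Set.univ := le_add_self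
  have h₁ : runCoeff μ₁ n ≤ runCoeff μ₂ n + s.totalVariation Set.univ * S := by
    refine (runCoeff_le_add_of_add_eq hord (add_negPart_eq_add_posPart μ₁ μ₂) n).trans ?_
    rw [sum_range_mul_reflect_comm]
    gcongr
  have h₂ : runCoeff μ₂ n ≤ runCoeff μ₁ n + s.totalVariation Set.univ * S :=
    (runCoeff_le_add_of_add_eq hord (add_negPart_eq_add_posPart μ₁ μ₂).symm n).trans (by gcongr)
  have hS : S.toReal
      = ∑ k ∈ Finset.range n, (runCoeff μ₁ k).toReal * (runCoeff μ₂ (n - k - 1)).toReal := by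
    rw [ENNReal.toReal_sum fun k _ => hfin _ _]
    exact Finset.sum_congr rfl fun k _ => ENNReal.toReal_mul
  rw [← hS, ← ENNReal.toReal_mul]
  exact ENNReal.abs_toReal_sub_le_of_le_add (runCoeff_ne_top _ _)
    (ENNReal.mul_ne_top (measure_ne_top _ _) (ENNReal.sum_ne_top.2 fun k _ => hfin _ _)) h₁ h₂

/-- |Lₙ(μ₁) − Lₙ(μ₂)| ≤ ‖μ₁ − μ₂‖ · Σ_{k=0}^{n−1} Lₖ(μ₁)·L_{n−k−1}(μ₂), where
‖μ₁ − μ₂‖ is the total variation norm of the signed measure μ₁ − μ₂. -/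
theorem stmt18 {T : Type*} [MeasurableSpace T] [PartialOrder T]
    (hord : MeasurableSet {p : T × T | p.1 < p.2})
    (μ₁ μ₂ : Measure T) [IsFiniteMeasure μ₁] [IsFiniteMeasure μ₂]
    (n : ℕ) (hn : 1 ≤ n) :
    |(runCoeff μ₁ n).toReal - (runCoeff μ₂ n).toReal|
      ≤ ((μ₁.toSignedMeasure - μ₂.toSignedMeasure).totalVariation Set.univ).toReal
        * ∑ k ∈ Finset.range n, (runCoeff μ₁ k).toReal * (runCoeff μ₂ (n - k - 1)).toReal :=
  stmt18_general hord μ₁ μ₂ n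
end
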